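/- Let (T, ⊣, ⊢, ·, ε, α) be a Hom-tridendriform color algebra. Then the product x∗y = x⊢y + ε(x,y)x⊣y + x·y makes (T, ∗, ε, α) a Hom-associative color algebra. -/
import Mathlib


/-- x ∗ y = x ⊢ y + ε(x,y) x ⊣ y + x · y, for x, y of degrees a, b. -/
def triStar {K G A : Type*} [Field K] [AddCommGroup G] [AddCommGroup A] [Module K A]
    (ε : G → G → K) (l r d : A →ₗ[K] A →ₗ[K] A) (a b : G) (x y : A) : A :=
  r x y + ε a b • l x y + d x y

/-- a Hom-tridendriform color algebra gives a Hom-associative color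
algebra via x∗y = x⊢y + ε(x,y)x⊣y + x·y. -/
theorem stmt_12 {K G A : Type*} [Field K] [AddCommGroup G] [AddCommGroup A] [Module K A]
    (ε : G → G → K) (𝒜 : G → Submodule K A)
    (hεs : ∀ a b, ε a b * ε b a = 1)
    (hεr : ∀ a b c, ε a (b + c) = ε a b * ε a c)
    (hεl : ∀ a b c, ε (a + b) c = ε a c * ε b c)
    (l r d : A →ₗ[K] A →ₗ[K] A) (α : A →ₗ[K] A)
    (hl : ∀ a b : G, ∀ x ∈ 𝒜 a, ∀ y ∈ 𝒜 b, l x y ∈ 𝒜 (a + b))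
    (hr : ∀ a b : G, ∀ x ∈ 𝒜 a, ∀ y ∈ 𝒜 b, r x y ∈ 𝒜 (a + b))
    (hd : ∀ a b : G, ∀ x ∈ 𝒜 a, ∀ y ∈ 𝒜 b, d x y ∈ 𝒜 (a + b))
    (hα : ∀ a : G, ∀ x ∈ 𝒜 a, α x ∈ 𝒜 a)
    -- Hom-tridendriform color algebra axioms
    (h1 : ∀ a b c : G, ∀ x ∈ 𝒜 a, ∀ y ∈ 𝒜 b, ∀ z ∈ 𝒜 c,
      l (l x y) (α z) = l (α x) (l y z + ε c b • r y z + ε c b • d y z))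
    (h2 : ∀ a b c : G, ∀ x ∈ 𝒜 a, ∀ y ∈ 𝒜 b, ∀ z ∈ 𝒜 c,
      l (r x y) (α z) = ε c a • r (α x) (l y z))
    (h3 : ∀ a b c : G, ∀ x ∈ 𝒜 a, ∀ y ∈ 𝒜 b, ∀ z ∈ 𝒜 c,
      r (α x) (r y z) = r (ε a b • l x y + r x y + d x y) (α z))
    (h4 : ∀ a b c : G, ∀ x ∈ 𝒜 a, ∀ y ∈ 𝒜 b, ∀ z ∈ 𝒜 c,
      d (l x y) (α z) = ε b a • d (α x) (r y z))
    (h5 : ∀ a b c : G, ∀ x ∈ 𝒜 a, ∀ y ∈ 𝒜 b, ∀ z ∈ 𝒜 c,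
      d (r x y) (α z) = r (α x) (d y z))
    (h6 : ∀ a b c : G, ∀ x ∈ 𝒜 a, ∀ y ∈ 𝒜 b, ∀ z ∈ 𝒜 c,
      l (d x y) (α z) = ε c a • d (α x) (l y z))
    (h7 : ∀ a b c : G, ∀ x ∈ 𝒜 a, ∀ y ∈ 𝒜 b, ∀ z ∈ 𝒜 c,
      d (d x y) (α z) = d (α x) (d y z)) :
    -- Hom-associativity of ∗
    ∀ a b c : G, ∀ x ∈ 𝒜 a, ∀ y ∈ 𝒜 b, ∀ z ∈ 𝒜 c,
      triStar ε l r d a (b + c) (α x) (triStar ε l r d b c y z)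
        = triStar ε l r d (a + b) c (triStar ε l r d a b x y) (α z) := by
  intro a b c x hx y hy z hz
  have e1 := h1 a b c x hx y hy z hz
  have e2 := h2 a b c x hx y hy z hz
  have e3 := h3 a b c x hx y hy z hz
  have e4 := h4 a b c x hx y hy z hz
  have e5 := h5 a b c x hx y hy z hz
  have e6 := h6 a b c x hx y hy z hz
  have e7 := h7 a b c x hx y hy z hz
  simp only [triStar, map_add, map_smul, LinearMap.add_apply, LinearMap.smul_apply,
    hεr, hεl] at *
  rw [e3, e2, e4, e6, e1, e5, e7]
  match_scalars
  all_goals try ring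
  all_goals try linear_combination -hεs a b
  all_goals try linear_combination (-(ε b c)) * hεs a c
  all_goals try linear_combination (-(ε a b * ε a c)) * hεs b c
  all_goals try linear_combination (-(ε a b * ε b c * ε c b) - ε b c + ε a b) * hεs a c - ε a b * hεs b c
  all_goals try linear_combination (ε a b * ε b c * ε c b + ε b c - ε a b) * hεs a c + ε a b * hεs b c
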